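/- Fix n ≥ 3, m ≥ 1, k ∈ {1,...,n-1}, β > 0 with β² > 4·4^m sin^{2m}(πk/n). Set λ = -4^m sin^{2m}(πk/n) and r_± = -β/2 ± √(β²/4 + λ). Then r_- < r_+ < 0, and for any c₁, c₂ ∈ ℂ, the function X(t) = (c₁ e^{r_+ t} + c₂ e^{r_- t})·P_k solves X'' + βX' = (-1)^{m+1}M^m X, and X(t) → 0 as t → ∞. -/

import Mathlib

/-- The discrete Laplacian circulant matrix `circ(-2,1,0,…,0,1)` over `ℂ`. -/
noncomputable def lapM (n : ℕ) [NeZero n] : Matrix (Fin n) (Fin n) ℂ :=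
  Matrix.of fun i j =>
    (if j = i + 1 then 1 else 0) + (if j = i - 1 then 1 else 0) + (if j = i then -2 else 0)

/-- The basis polygon `P_k = (1, ω^k, …, ω^{(n-1)k})` with `ω = e^{2πi/n}`. -/
noncomputable def Pvec (n k : ℕ) : Fin n → ℂ :=
  fun j => Complex.exp (2 * (Real.pi : ℂ) * Complex.I * (k : ℂ) * ((j : ℕ) : ℂ) / (n : ℂ))

/-!
`P_k` is an eigenvector of every circulant matrix; for the Laplacian the eigenvalue is
`ω^k + ω^{-k} - 2 = -4 sin²(πk/n)`, so `(-1)^{m+1} M^m P_k = λ P_k`. Separating variables,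
`X = f • P_k` solves the system as soon as `f'' + βf' = λf`, which holds for
`f = c₁ e^{r₊t} + c₂ e^{r₋t}` because `r_±` are the roots of `r² + βr = λ`. Since
`-β²/4 < λ < 0`, both roots are real and lie in `(-β, 0)`, so `X` decays.
-/

open Complex Filter Matrix Topology
open scoped Real

section Laplacian

variable {n : ℕ} [NeZero n]

theorem lapM_mulVec_apply (v : Fin n → ℂ) (j : Fin n) :
    (lapM n *ᵥ v) j = v (j + 1) + v (j - 1) - 2 * v j := by
  simp only [lapM, mulVec, dotProduct, of_apply, add_mul, ite_mul, one_mul, zero_mul,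
    Finset.sum_add_distrib, Finset.sum_ite_eq', Finset.mem_univ, if_true]
  ring

theorem pow_val_add_one_of_pow_eq_one {ζ : ℂ} (hζ : ζ ^ n = 1) (j : Fin n) :
    ζ ^ ((j + 1 : Fin n) : ℕ) = ζ * ζ ^ (j : ℕ) := by
  rw [Fin.val_add, ← pow_eq_pow_mod _ hζ, pow_add, Fin.val_one', ← pow_eq_pow_mod _ hζ,
    pow_one, mul_comm]

theorem lapM_mulVec_pow_val {ζ : ℂ} (hζ : ζ ^ n = 1) :
    lapM n *ᵥ (fun j : Fin n => ζ ^ (j : ℕ))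
      = (ζ + ζ⁻¹ - 2) • fun j : Fin n => ζ ^ (j : ℕ) := by
  have hζ0 : ζ ≠ 0 := by
    rintro rfl
    simp [NeZero.ne n] at hζ
  funext j
  have hpred : ζ ^ ((j - 1 : Fin n) : ℕ) = ζ⁻¹ * ζ ^ (j : ℕ) := by
    rw [eq_inv_mul_iff_mul_eq₀ hζ0, ← pow_val_add_one_of_pow_eq_one hζ, sub_add_cancel]
  rw [lapM_mulVec_apply, pow_val_add_one_of_pow_eq_one hζ, hpred, Pi.smul_apply, smul_eq_mul]
  ring

end Laplacian

theorem exp_two_mul_I_add_inv_sub_two (x : ℂ) :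
    exp (2 * x * I) + (exp (2 * x * I))⁻¹ - 2 = -4 * sin x ^ 2 := by
  rw [← exp_neg, show -(2 * x * I) = -(2 * x) * I by ring, ← two_cos, cos_two_mul]
  linear_combination 4 * cos_sq_add_sin_sq x

theorem Pvec_eq_pow (n k : ℕ) :
    Pvec n k = fun j : Fin n => exp (2 * π * I * k / n) ^ (j : ℕ) := by
  funext j
  rw [Pvec, ← exp_nat_mul]
  ring_nf

section Pvec

variable (n : ℕ) [NeZero n] (k : ℕ)

theorem exp_two_pi_I_mul_div_pow :
    exp (2 * π * I * k / n) ^ n = 1 := by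
  rw [← exp_nat_mul, mul_div_cancel₀ _ (Nat.cast_ne_zero.2 (NeZero.ne n)), mul_comm,
    exp_nat_mul_two_pi_mul_I]

theorem lapM_mulVec_Pvec :
    lapM n *ᵥ Pvec n k = ((-4 * Real.sin (π * k / n) ^ 2 : ℝ) : ℂ) • Pvec n k := by
  rw [Pvec_eq_pow, lapM_mulVec_pow_val (exp_two_pi_I_mul_div_pow n k)]
  congr 1
  rw [show 2 * π * I * k / n = 2 * ((π * k / n : ℝ) : ℂ) * I by push_cast; ring,
    exp_two_mul_I_add_inv_sub_two]
  push_cast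
  ring

end Pvec

theorem pow_mulVec_of_mulVec_eq_smul {ι R : Type*} [Fintype ι] [DecidableEq ι] [CommRing R]
    {A : Matrix ι ι R} {v : ι → R} {μ : R} (h : A *ᵥ v = μ • v) (m : ℕ) :
    (A ^ m) *ᵥ v = μ ^ m • v := by
  induction m with
  | zero => simp
  | succ m ih => rw [pow_succ, ← mulVec_mulVec, h, mulVec_smul, ih, smul_smul, pow_succ']

noncomputable def expCombination (c₁ c₂ a b : ℂ) (t : ℝ) : ℂ :=
  c₁ * exp (a * t) + c₂ * exp (b * t)

section ExpCombination

variable (c₁ c₂ a b : ℂ)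

theorem hasDerivAt_cexp_mul_ofReal (t : ℝ) :
    HasDerivAt (fun s : ℝ => exp (a * s)) (a * exp (a * t)) t := by
  simpa [mul_comm] using (((hasDerivAt_id t).ofReal_comp).const_mul a).cexp

theorem hasDerivAt_expCombination (t : ℝ) :
    HasDerivAt (expCombination c₁ c₂ a b) (expCombination (c₁ * a) (c₂ * b) a b t) t := by
  simp only [expCombination, mul_assoc]
  exact ((hasDerivAt_cexp_mul_ofReal a t).const_mul c₁).add
    ((hasDerivAt_cexp_mul_ofReal b t).const_mul c₂)

theorem differentiable_expCombination : Differentiable ℝ (expCombination c₁ c₂ a b) :=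
  fun t => (hasDerivAt_expCombination c₁ c₂ a b t).differentiableAt

theorem deriv_expCombination :
    deriv (expCombination c₁ c₂ a b) = expCombination (c₁ * a) (c₂ * b) a b :=
  funext fun t => (hasDerivAt_expCombination c₁ c₂ a b t).deriv

theorem expCombination_ode {β μ : ℂ} (ha : a ^ 2 + β * a = μ) (hb : b ^ 2 + β * b = μ)
    (t : ℝ) :
    deriv (deriv (expCombination c₁ c₂ a b)) t + β * deriv (expCombination c₁ c₂ a b) t
      = μ * expCombination c₁ c₂ a b t := by
  simp only [deriv_expCombination, expCombination]
  linear_combination (c₁ * exp (a * t)) * ha + (c₂ * exp (b * t)) * hb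

theorem tendsto_cexp_mul_ofReal_atTop {a : ℂ} (ha : a.re < 0) :
    Tendsto (fun t : ℝ => exp (a * t)) atTop (𝓝 0) := by
  rw [tendsto_exp_nhds_zero_iff]
  simpa using tendsto_id.const_mul_atTop_of_neg ha

theorem tendsto_expCombination_atTop {a b : ℂ} (ha : a.re < 0) (hb : b.re < 0) :
    Tendsto (expCombination c₁ c₂ a b) atTop (𝓝 0) := by
  have h := ((tendsto_cexp_mul_ofReal_atTop ha).const_mul c₁).add
    ((tendsto_cexp_mul_ofReal_atTop hb).const_mul c₂)
  rwa [mul_zero, mul_zero, add_zero] at h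

end ExpCombination

theorem ode_of_smul_eigenvector {ι : Type*} [Fintype ι] {L : Matrix ι ι ℂ} {v : ι → ℂ}
    {μ : ℂ} (hv : L *ᵥ v = μ • v) {f : ℝ → ℂ} (hf : Differentiable ℝ f)
    (hf' : Differentiable ℝ (deriv f)) {β : ℝ}
    (hode : ∀ t, deriv (deriv f) t + β * deriv f t = μ * f t) (t : ℝ) :
    deriv (deriv fun s => f s • v) t + β • deriv (fun s => f s • v) t
      = L *ᵥ (f t • v) := by
  have hderiv : deriv (fun s => f s • v) = fun s => deriv f s • v :=
    funext fun s => deriv_smul_const (hf s) v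
  rw [hderiv, deriv_smul_const (hf' t), mulVec_smul, hv, smul_smul, ← smul_assoc, ← add_smul,
    real_smul, hode, mul_comm]

theorem sin_pi_mul_div_pos {k n : ℕ} (hk : 0 < k) (hkn : k < n) :
    0 < Real.sin (π * k / n) := by
  have hn : (0 : ℝ) < n := by exact_mod_cast hk.trans hkn
  apply Real.sin_pos_of_pos_of_lt_pi (by positivity)
  rw [div_lt_iff₀ hn, mul_lt_mul_iff_right₀ Real.pi_pos]
  exact_mod_cast hkn

theorem neg_one_pow_succ_mul_neg_four_mul_sq_pow (m : ℕ) (x : ℝ) :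
    (-1) ^ (m + 1) * (-4 * x ^ 2) ^ m = -4 ^ m * x ^ (2 * m) := by
  have hsign : (-1 : ℝ) ^ (m + 1) * (-1) ^ m = -1 := by
    rw [← pow_add, show m + 1 + m = 2 * m + 1 by ring, pow_succ, pow_mul]
    norm_num
  rw [show -4 * x ^ 2 = -1 * (4 * x ^ 2) by ring, mul_pow, mul_pow, pow_mul]
  linear_combination (4 ^ m * (x ^ 2) ^ m) * hsign

theorem overdamped_mode_solution_general (n m k : ℕ) [NeZero n]
    (hk1 : 1 ≤ k) (hkn : k < n) (β : ℝ) (hβ : 0 < β)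
    (hβ2 : 4 * ((4 : ℝ) ^ m * Real.sin (Real.pi * k / n) ^ (2 * m)) < β ^ 2)
    (c₁ c₂ : ℂ) (lam rp rm : ℝ)
    (hlam : lam = -(4 : ℝ) ^ m * Real.sin (Real.pi * k / n) ^ (2 * m))
    (hrp : rp = -β / 2 + Real.sqrt (β ^ 2 / 4 + lam))
    (hrm : rm = -β / 2 - Real.sqrt (β ^ 2 / 4 + lam))
    (X : ℝ → Fin n → ℂ)
    (hX : ∀ t : ℝ, X t
      = (c₁ * Complex.exp ((rp : ℂ) * t) + c₂ * Complex.exp ((rm : ℂ) * t)) • Pvec n k) :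
    (rm < rp ∧ rp < 0) ∧
      (∀ t : ℝ, deriv (deriv X) t + β • deriv X t
        = ((-1 : ℂ) ^ (m + 1) • (lapM n) ^ m).mulVec (X t)) ∧
      Filter.Tendsto X Filter.atTop (nhds 0) := by
  have hlam_neg : lam < 0 := by
    have := sin_pi_mul_div_pos hk1 hkn
    rw [hlam, neg_mul, neg_lt_zero]
    positivity
  have hdisc : 0 < β ^ 2 / 4 + lam := by linarith
  have hsqrt_lt : Real.sqrt (β ^ 2 / 4 + lam) < β / 2 := by
    rw [Real.sqrt_lt' (half_pos hβ)]
    linarith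
  have horder : rm < rp ∧ rp < 0 := by
    constructor <;> linarith [Real.sqrt_pos.2 hdisc]
  have hroot : ∀ r : ℝ, (r + β / 2) ^ 2 = β ^ 2 / 4 + lam → (r : ℂ) ^ 2 + β * r = lam :=
    fun r h => by exact_mod_cast (by linear_combination h : r ^ 2 + β * r = lam)
  have hs := Real.sq_sqrt hdisc.le
  have heig : ((-1 : ℂ) ^ (m + 1) • lapM n ^ m) *ᵥ Pvec n k = (lam : ℂ) • Pvec n k := by
    rw [smul_mulVec, pow_mulVec_of_mulVec_eq_smul (lapM_mulVec_Pvec n k), smul_smul, hlam,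
      ← neg_one_pow_succ_mul_neg_four_mul_sq_pow]
    push_cast
    rfl
  have hX' : X = fun t => expCombination c₁ c₂ rp rm t • Pvec n k := funext hX
  subst hX'
  refine ⟨horder, ode_of_smul_eigenvector heig (differentiable_expCombination _ _ _ _) ?_
    (expCombination_ode _ _ _ _ (hroot rp (by rw [hrp]; linear_combination hs))
      (hroot rm (by rw [hrm]; linear_combination hs))), ?_⟩
  · rw [deriv_expCombination]
    exact differentiable_expCombination _ _ _ _
  · have hdecay := tendsto_expCombination_atTop c₁ c₂ (a := rp) (b := rm)
      (by simpa using horder.2) (by simpa using horder.1.trans horder.2)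
    simpa using hdecay.smul_const (Pvec n k)

/-- Overdamped mode solutions: with `λ = -4^m sin^{2m}(πk/n)`, `β² > -4λ` and
`r_± = -β/2 ± √(β²/4 + λ)`, we have `r_- < r_+ < 0`, the function
`X(t) = (c₁ e^{r₊t} + c₂ e^{r₋t}) • P_k` solves `X'' + βX' = (-1)^{m+1} M^m X`,
and `X(t) → 0` as `t → ∞`. -/
theorem overdamped_mode_solution (n m k : ℕ) [NeZero n] (hn : 3 ≤ n) (hm : 1 ≤ m)
    (hk1 : 1 ≤ k) (hkn : k < n) (β : ℝ) (hβ : 0 < β)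
    (hβ2 : 4 * ((4 : ℝ) ^ m * Real.sin (Real.pi * k / n) ^ (2 * m)) < β ^ 2)
    (c₁ c₂ : ℂ) (lam rp rm : ℝ)
    (hlam : lam = -(4 : ℝ) ^ m * Real.sin (Real.pi * k / n) ^ (2 * m))
    (hrp : rp = -β / 2 + Real.sqrt (β ^ 2 / 4 + lam))
    (hrm : rm = -β / 2 - Real.sqrt (β ^ 2 / 4 + lam))
    (X : ℝ → Fin n → ℂ)
    (hX : ∀ t : ℝ, X t
      = (c₁ * Complex.exp ((rp : ℂ) * t) + c₂ * Complex.exp ((rm : ℂ) * t)) • Pvec n k) :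
    (rm < rp ∧ rp < 0) ∧
      (∀ t : ℝ, deriv (deriv X) t + β • deriv X t
        = ((-1 : ℂ) ^ (m + 1) • (lapM n) ^ m).mulVec (X t)) ∧
      Filter.Tendsto X Filter.atTop (nhds 0) :=
  overdamped_mode_solution_general n m k hk1 hkn β hβ hβ2 c₁ c₂ lam rp rm hlam hrp hrm X hX
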